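/- arXiv:1102.4353 — 7 statements merged into one kernel-verified Lean document; each statement's English description precedes it below -/
import Mathlib

section
/- Let d and n be positive integers and a_1, ..., a_n integers. If for every positive integer k, d^k divides a_1^k + a_2^k + ... + a_n^k, then d divides each a_i. -/
open Finset

-- Key lemma: if p is prime and p^k divides ∑ b i ^ k for all k > 0, then p divides each b i.
lemma key_prime {p n : ℕ} (hp : p.Prime) (b : Fin n → ℤ)
    (h : ∀ k : ℕ, 0 < k → (p : ℤ) ^ k ∣ ∑ i, b i ^ k) :
    ∀ i, (p : ℤ) ∣ b i := by
  by_contra hcon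
  push_neg at hcon
  obtain ⟨i₀, hi₀⟩ := hcon
  set S : Finset (Fin n) := Finset.univ.filter (fun i => ¬ (p : ℤ) ∣ b i) with hS
  have hi₀S : i₀ ∈ S := by simp [hS, hi₀]
  have htpos : 0 < S.card := Finset.card_pos.mpr ⟨i₀, hi₀S⟩
  have htn : S.card ≤ n := by simpa using Finset.card_le_card (Finset.subset_univ S)
  -- choose N with n < p^N
  set N := n + 1 with hN
  have hnN : n < p ^ N := lt_trans (Nat.lt_succ_self n) (Nat.lt_pow_self hp.one_lt : N < p ^ N)
  set q := p ^ N with hq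
  have hNpos : 0 < N := Nat.succ_pos n
  have hqpos : 0 < q := pow_pos hp.pos N
  set k := N * Nat.totient q with hk
  have hφpos : 0 < Nat.totient q := Nat.totient_pos.mpr hqpos
  have hkpos : 0 < k := Nat.mul_pos hNpos hφpos
  have hNk : N ≤ k := Nat.le_mul_of_pos_right N hφpos
  have hqcast : (q : ℤ) = (p : ℤ) ^ N := by push_cast [hq]; ring
  -- in ZMod q, the sum is zero
  have hsum : ((∑ i, b i ^ k : ℤ) : ZMod q) = 0 := by
    rw [ZMod.intCast_zmod_eq_zero_iff_dvd]
    refine dvd_trans ?_ (h k hkpos)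
    rw [hqcast]
    exact pow_dvd_pow _ hNk
  -- compute each term in ZMod q
  have hterm : ∀ i : Fin n, ((b i : ZMod q)) ^ k = if i ∈ S then 1 else 0 := by
    intro i
    by_cases hi : i ∈ S
    · simp only [hi, if_true]
      have hndvd : ¬ (p : ℤ) ∣ b i := by
        simpa [hS] using hi
      have hcop : Nat.Coprime (b i).natAbs q := by
        apply Nat.Coprime.pow_right
        rw [Nat.coprime_comm, hp.coprime_iff_not_dvd]
        exact fun hc => hndvd (Int.natCast_dvd.mpr hc)
      have hunit : IsUnit ((b i : ZMod q)) := by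
        rcases Int.natAbs_eq (b i) with he | he
        · rw [he, Int.cast_natCast]
          exact (ZMod.isUnit_iff_coprime _ _).mpr hcop
        · rw [he, Int.cast_neg, Int.cast_natCast]
          exact ((ZMod.isUnit_iff_coprime _ _).mpr hcop).neg
      obtain ⟨u, hu⟩ := hunit
      have hu1 : u ^ k = 1 := by rw [hk, pow_mul', ZMod.pow_totient, one_pow]
      rw [← hu, ← Units.val_pow_eq_pow_val, hu1, Units.val_one]
    · simp only [hi, if_false]
      have hdvd : (p : ℤ) ∣ b i := by
        by_contra hc
        exact hi (by simp [hS, hc])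
      obtain ⟨c, hc⟩ := hdvd
      have hz : (q : ℤ) ∣ b i ^ k := by
        rw [hc, mul_pow, hqcast]
        exact Dvd.dvd.mul_right (pow_dvd_pow _ hNk) _
      rw [← ZMod.intCast_zmod_eq_zero_iff_dvd] at hz
      push_cast at hz
      exact hz
  -- so the sum equals S.card in ZMod q
  have hsum2 : ((∑ i, b i ^ k : ℤ) : ZMod q) = (S.card : ZMod q) := by
    push_cast
    rw [Finset.sum_congr rfl (fun i _ => hterm i), Finset.sum_ite_mem,
      Finset.univ_inter, Finset.sum_const]
    simp
  rw [hsum2] at hsum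
  have hdvdcard : q ∣ S.card := (ZMod.natCast_eq_zero_iff _ _).mp hsum
  have := Nat.le_of_dvd htpos hdvdcard
  omega

-- Prime power version, by induction on the exponent.
lemma key_prime_pow {p : ℕ} (hp : p.Prime) (e : ℕ) : ∀ {n : ℕ} (b : Fin n → ℤ),
    (∀ k : ℕ, 0 < k → (p : ℤ) ^ (e * k) ∣ ∑ i, b i ^ k) →
    ∀ i, (p : ℤ) ^ e ∣ b i := by
  induction e with
  | zero => intro n b _ i; simp
  | succ e ih =>
    intro n b h i
    have h1 : ∀ k : ℕ, 0 < k → (p : ℤ) ^ k ∣ ∑ i, b i ^ k := by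
      intro k hk
      refine dvd_trans ?_ (h k hk)
      exact pow_dvd_pow _ (by nlinarith)
    have hpdvd := key_prime hp b h1
    choose c hc using hpdvd
    have h2 : ∀ k : ℕ, 0 < k → (p : ℤ) ^ (e * k) ∣ ∑ i, c i ^ k := by
      intro k hk
      have hsum : (∑ i, b i ^ k) = (p : ℤ) ^ k * ∑ i, c i ^ k := by
        rw [Finset.mul_sum]
        refine Finset.sum_congr rfl fun j _ => ?_
        rw [hc j, mul_pow]
      have hd := h k hk
      rw [hsum, show (e + 1) * k = k + e * k by ring, pow_add] at hd
      have hne : ((p : ℤ) ^ k) ≠ 0 := pow_ne_zero _ (by exact_mod_cast hp.pos.ne')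
      exact (mul_dvd_mul_iff_left hne).mp hd
    have := ih c h2 i
    rw [hc i, pow_succ']
    exact mul_dvd_mul_left _ this

theorem dvd_of_dvd_pow_sums (d n : ℕ) (hd : 0 < d) (hn : 0 < n) (a : Fin n → ℤ)
    (h : ∀ k : ℕ, 0 < k → (d : ℤ) ^ k ∣ ∑ i, a i ^ k) :
    ∀ i, (d : ℤ) ∣ a i := by
  intro i
  rw [Int.natCast_dvd, Nat.dvd_iff_prime_pow_dvd_dvd]
  intro p e hp hpe
  have key := key_prime_pow hp e a ?_ i
  · rw [← Int.natCast_dvd]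
    exact_mod_cast key
  · intro k hk
    refine dvd_trans ?_ (h k hk)
    have hpd : ((p : ℤ) ^ e) ∣ (d : ℤ) := by exact_mod_cast Int.natCast_dvd_natCast.mpr hpe
    calc (p : ℤ) ^ (e * k) = ((p : ℤ) ^ e) ^ k := by rw [pow_mul]
      _ ∣ (d : ℤ) ^ k := pow_dvd_pow_of_dvd hpd k
end

section
/- Let q_1, ..., q_n be rational numbers. If for every positive integer k the sum q_1^k + q_2^k + ... + q_n^k is an integer, then each q_i is an integer. -/
open Finset

private lemma zmod_pow_totient {N : ℕ} [NeZero N] {x : ZMod N} (hx : IsUnit x) :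
    x ^ Nat.totient N = 1 := by
  obtain ⟨u, rfl⟩ := hx
  have := ZMod.pow_totient u
  calc (u : ZMod N) ^ Nat.totient N = ((u ^ Nat.totient N : (ZMod N)ˣ) : ZMod N) := by
        push_cast; ring
    _ = 1 := by rw [this]; rfl

private lemma key_step (n : ℕ) (a : Fin n → ℤ) (p : ℕ) (hp : p.Prime)
    (d : ℕ) (hpd : p ∣ d)
    (h : ∀ k : ℕ, 0 < k → (d : ℤ) ^ k ∣ ∑ i, a i ^ k) :
    ∀ i, (p : ℤ) ∣ a i := by
  by_contra hc
  push_neg at hc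
  obtain ⟨i₀, hi₀⟩ := hc
  set m := n + 1 with hm
  set k := Nat.totient (p ^ m) with hk
  have hp2 : 2 ≤ p := hp.two_le
  have hmk : m ≤ k := by
    have h1 : m - 1 < 2 ^ (m - 1) := Nat.lt_two_pow_self (n := m - 1)
    have h2 : (2:ℕ) ^ (m-1) ≤ p ^ (m-1) := Nat.pow_le_pow_left hp2 _
    have h3 : k = p ^ (m - 1) * (p - 1) := Nat.totient_prime_pow hp (Nat.succ_pos n)
    have h4 : p ^ (m-1) * 1 ≤ p ^ (m-1) * (p-1) :=
      Nat.mul_le_mul_left _ (by omega)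
    omega
  have hkpos : 0 < k := Nat.totient_pos.mpr (Nat.pow_pos (n := m) hp.pos)
  have hNe : NeZero (p ^ m) := ⟨(Nat.pow_pos (n := m) hp.pos).ne'⟩
  -- p^m divides the power sum
  have hdvd : ((p : ℤ)) ^ m ∣ ∑ i, a i ^ k := by
    refine dvd_trans ?_ (h k hkpos)
    calc ((p:ℤ))^m ∣ (p:ℤ)^k := pow_dvd_pow _ hmk
      _ ∣ (d:ℤ)^k := pow_dvd_pow_of_dvd (Int.natCast_dvd_natCast.mpr hpd) _
  -- work in ZMod (p^m)
  set t := (univ.filter (fun i => ¬ (p:ℤ) ∣ a i)).card with ht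
  have htpos : 0 < t := card_pos.mpr ⟨i₀, by simp [hi₀]⟩
  have htn : t ≤ n := by
    simpa using card_filter_le (univ : Finset (Fin n)) (fun i => ¬ (p:ℤ) ∣ a i)
  have hnpm : n < p ^ m := by
    calc n < 2 ^ n := Nat.lt_two_pow_self (n := n)
      _ ≤ 2 ^ m := Nat.pow_le_pow_right (by norm_num) (by omega)
      _ ≤ p ^ m := Nat.pow_le_pow_left hp2 _
  have hzero : ((∑ i, a i ^ k : ℤ) : ZMod (p ^ m)) = 0 := by
    rw [ZMod.intCast_zmod_eq_zero_iff_dvd]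
    exact_mod_cast hdvd
  have hsum : ((∑ i, a i ^ k : ℤ) : ZMod (p ^ m)) = (t : ZMod (p ^ m)) := by
    push_cast
    rw [← sum_filter_add_sum_filter_not univ (fun i => ¬ (p:ℤ) ∣ a i)]
    have h1 : ∑ i ∈ univ.filter (fun i => ¬ (p:ℤ) ∣ a i),
        ((a i : ZMod (p ^ m))) ^ k = (t : ZMod (p ^ m)) := by
      rw [ht, card_eq_sum_ones, Nat.cast_sum]
      refine sum_congr rfl fun i hi => ?_
      simp only [mem_filter] at hi
      have hco : (a i).natAbs.Coprime (p ^ m) := by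
        refine Nat.Coprime.pow_right _ ?_
        rw [Nat.coprime_comm]
        rw [hp.coprime_iff_not_dvd]
        intro hdv
        exact hi.2 (Int.natAbs_dvd_natAbs.mp (by simpa using hdv))
      have hunit : IsUnit ((a i : ZMod (p ^ m))) := by
        rcases Int.natAbs_eq (a i) with heq | heq
        · rw [heq, Int.cast_natCast]
          exact (ZMod.isUnit_iff_coprime _ _).mpr hco
        · rw [heq, Int.cast_neg, Int.cast_natCast]
          exact ((ZMod.isUnit_iff_coprime _ _).mpr hco).neg
      simp [zmod_pow_totient hunit]
      exact zmod_pow_totient hunit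
    have h2 : ∑ i ∈ univ.filter (fun i => ¬¬ (p:ℤ) ∣ a i),
        ((a i : ZMod (p ^ m))) ^ k = 0 := by
      refine sum_eq_zero fun i hi => ?_
      simp only [mem_filter, not_not] at hi
      have : ((p:ℤ))^m ∣ a i ^ k :=
        dvd_trans (pow_dvd_pow _ hmk) (pow_dvd_pow_of_dvd hi.2 _)
      have : ((a i ^ k : ℤ) : ZMod (p ^ m)) = 0 := by
        rw [ZMod.intCast_zmod_eq_zero_iff_dvd]; exact_mod_cast this
      push_cast at this
      exact this
    rw [h1, h2, add_zero]
  rw [hzero] at hsum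
  have : (p ^ m) ∣ t := by
    rwa [eq_comm, ZMod.natCast_eq_zero_iff] at hsum
  have := Nat.le_of_dvd htpos this
  omega

private lemma div_all (n : ℕ) : ∀ d : ℕ, 0 < d → ∀ a : Fin n → ℤ,
    (∀ k : ℕ, 0 < k → (d : ℤ) ^ k ∣ ∑ i, a i ^ k) → ∀ i, (d : ℤ) ∣ a i := by
  intro d
  induction d using Nat.strong_induction_on with
  | _ d ih =>
    intro hd a h i
    rcases eq_or_lt_of_le (Nat.one_le_of_lt hd) with h1 | h1
    · simp [← h1]
    · -- d ≥ 2, pick a prime factor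
      obtain ⟨p, hp, hpd⟩ := Nat.exists_prime_and_dvd (by omega : d ≠ 1)
      have hpall := key_step n a p hp d hpd h
      -- write a i = p * b i
      choose b hb using hpall
      obtain ⟨e, he⟩ := hpd
      have hppos : 0 < p := hp.pos
      have hepos : 0 < e := by
        rcases Nat.eq_zero_or_pos e with rfl | h2
        · omega
        · exact h2
      have hed : e < d := by
        have : e < p * e := (lt_mul_iff_one_lt_left hepos).mpr hp.one_lt
        omega
      have hb' : ∀ k : ℕ, 0 < k → (e : ℤ) ^ k ∣ ∑ j, b j ^ k := by
        intro k hk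
        have hd1 := h k hk
        have heq : (∑ j, a j ^ k) = (p:ℤ) ^ k * ∑ j, b j ^ k := by
          rw [mul_sum]
          refine sum_congr rfl fun j _ => ?_
          rw [hb j, mul_pow]
        rw [heq, he] at hd1
        push_cast at hd1
        rw [mul_pow] at hd1
        have hpne : ((p:ℤ))^k ≠ 0 := by positivity
        exact (mul_dvd_mul_iff_left hpne).mp hd1
      have := ih e hed hepos b hb' i
      rw [hb i, he]
      push_cast
      exact mul_dvd_mul_left _ this

theorem rat_int_of_int_pow_sums (n : ℕ) (q : Fin n → ℚ)
    (h : ∀ k : ℕ, 0 < k → ∃ m : ℤ, ∑ i, q i ^ k = (m : ℚ)) :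
    ∀ i, ∃ m : ℤ, q i = (m : ℚ) := by
  set D : ℕ := ∏ i, (q i).den with hD
  have hDpos : 0 < D := prod_pos fun i _ => (q i).pos
  have hden : ∀ i, ((q i).den : ℤ) ∣ (D : ℤ) := fun i =>
    Int.natCast_dvd_natCast.mpr (dvd_prod_of_mem _ (mem_univ i))
  -- a i := q i * D as an integer
  have hint : ∀ i, ∃ a : ℤ, (a : ℚ) = q i * D := by
    intro i
    obtain ⟨c, hc⟩ := hden i
    refine ⟨(q i).num * c, ?_⟩
    push_cast
    rw [mul_comm (q i)]
    have : (D : ℚ) = ((q i).den : ℚ) * (c : ℚ) := by exact_mod_cast hc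
    rw [this, mul_assoc, mul_comm ((c:ℚ)), ← mul_assoc]
    congr 1
    rw [mul_comm]
    exact_mod_cast (Rat.mul_den_eq_num (q i)).symm
  choose a ha using hint
  have hsum : ∀ k : ℕ, 0 < k → (D : ℤ) ^ k ∣ ∑ i, a i ^ k := by
    intro k hk
    obtain ⟨m, hm⟩ := h k hk
    refine ⟨m, ?_⟩
    have : ((∑ i, a i ^ k : ℤ) : ℚ) = ((D:ℤ)^k * m : ℤ) := by
      push_cast
      calc (∑ i, (a i : ℚ) ^ k) = ∑ i, (q i * D) ^ k := by
            refine sum_congr rfl fun i _ => by rw [ha i]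
        _ = (∑ i, q i ^ k) * (D:ℚ)^k := by rw [sum_mul]; exact sum_congr rfl fun i _ => mul_pow _ _ _
        _ = (D:ℚ)^k * m := by rw [hm]; ring
    exact_mod_cast this
  have hdvd := div_all n D hDpos a hsum
  intro i
  obtain ⟨b, hbb⟩ := hdvd i
  refine ⟨b, ?_⟩
  have hq : q i = (a i : ℚ) / D := by
    rw [ha i]
    field_simp
  rw [hq, hbb]
  push_cast
  field_simp
end

section
/- Let p be a prime, n a positive integer, and a_1, ..., a_n integers. If p^n divides a_1^φ(p^n) + ... + a_n^φ(p^n), where φ is Euler's totient function, then p divides every a_i. -/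
theorem prime_dvd_of_totient_pow_sum (p n : ℕ) (hp : p.Prime) (hn : 0 < n)
    (a : Fin n → ℤ)
    (h : (p : ℤ) ^ n ∣ ∑ i, a i ^ Nat.totient (p ^ n)) :
    ∀ i, (p : ℤ) ∣ a i := by
  set N := p ^ n with hN
  have hN0 : N ≠ 0 := pow_ne_zero _ hp.pos.ne'
  have hnφ : n ≤ Nat.totient N := by
    rw [hN, Nat.totient_prime_pow hp hn]
    calc n ≤ 2 ^ (n - 1) * 1 := by
            rw [mul_one]
            have h2 : n - 1 < 2 ^ (n - 1) := Nat.lt_two_pow_self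
            calc n = n - 1 + 1 := (Nat.succ_pred_eq_of_pos hn).symm
              _ ≤ 2 ^ (n - 1) := Nat.succ_le_of_lt h2
      _ ≤ p ^ (n - 1) * (p - 1) := by
            apply Nat.mul_le_mul
            · exact Nat.pow_le_pow_left hp.two_le _
            · have := hp.two_le; omega
  -- each term mod N is 0 or 1
  have key : ∀ i : Fin n, ((a i : ZMod N)) ^ Nat.totient N
      = if (p : ℤ) ∣ a i then 0 else 1 := by
    intro i
    split_ifs with hd
    · have : (N : ℤ) ∣ a i ^ Nat.totient N := by
        calc (N : ℤ) = (p : ℤ) ^ n := by push_cast [hN]; ring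
          _ ∣ (p : ℤ) ^ Nat.totient N := pow_dvd_pow _ hnφ
          _ ∣ a i ^ Nat.totient N := pow_dvd_pow_of_dvd hd _
      have := (ZMod.intCast_zmod_eq_zero_iff_dvd (a i ^ Nat.totient N) N).mpr this
      push_cast at this
      exact this
    · have hcop : Nat.Coprime (a i).natAbs N := by
        apply Nat.Coprime.pow_right
        rw [Nat.coprime_comm]
        rw [Nat.Prime.coprime_iff_not_dvd hp]
        intro hdd
        exact hd (Int.natCast_dvd.mpr hdd)
      have hu : IsUnit ((a i : ZMod N)) := by
        rcases Int.natAbs_eq (a i) with he | he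
        · rw [he, Int.cast_natCast]
          exact (ZMod.isUnit_iff_coprime _ N).mpr hcop
        · rw [he, Int.cast_neg, Int.cast_natCast, IsUnit.neg_iff]
          exact (ZMod.isUnit_iff_coprime _ N).mpr hcop
      obtain ⟨u, hu⟩ := hu
      rw [← hu, ← Units.val_pow_eq_pow_val, ZMod.pow_totient, Units.val_one]
  -- sum mod N equals card of bad set
  have hsum : ((∑ i, a i ^ Nat.totient N : ℤ) : ZMod N) = 0 :=
    (ZMod.intCast_zmod_eq_zero_iff_dvd _ N).mpr (by push_cast [hN]; exact_mod_cast h)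
  push_cast at hsum
  rw [Finset.sum_congr rfl (fun i _ => key i)] at hsum
  have hsum2 : ((Finset.univ.filter fun i => ¬ (p : ℤ) ∣ a i).card : ZMod N) = 0 := by
    rw [← hsum, Finset.sum_ite, Finset.sum_const_zero, zero_add, Finset.sum_const,
      nsmul_eq_mul, mul_one]
  have hdvd : N ∣ (Finset.univ.filter fun i => ¬ (p : ℤ) ∣ a i).card :=
    (ZMod.natCast_eq_zero_iff _ N).mp hsum2
  have hlt : (Finset.univ.filter fun i => ¬ (p : ℤ) ∣ a i).card < N := by
    calc _ ≤ (Finset.univ : Finset (Fin n)).card := Finset.card_filter_le _ _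
      _ = n := by simp
      _ < p ^ n := Nat.lt_pow_self hp.one_lt
  have hzero : (Finset.univ.filter fun i => ¬ (p : ℤ) ∣ a i).card = 0 :=
    Nat.eq_zero_of_dvd_of_lt hdvd hlt
  intro i
  by_contra hdi
  have : i ∈ Finset.univ.filter fun j => ¬ (p : ℤ) ∣ a j := by simp [hdi]
  rw [Finset.card_eq_zero] at hzero
  simp [hzero] at this
end

section
/- Let G be a finite group and ρ : G → GL(V) an irreducible complex representation. Then (1/|G|²) ∑_{a,b ∈ G} ρ(aba⁻¹b⁻¹) = (1/(dim V)²) · Id. -/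
set_option linter.unusedSectionVars false

open Module LinearMap

section aux

variable {G : Type*} [Group G] [Fintype G]
variable {V : Type*} [AddCommGroup V] [Module ℂ V] [FiniteDimensional ℂ V] [Nontrivial V]
variable (ρ : Representation ℂ G V)

/-- Schur's lemma from the irreducibility hypothesis. -/
lemma schur_aux
    (hirr : ∀ W : Submodule ℂ V, (∀ g : G, W.map (ρ g) ≤ W) → W = ⊥ ∨ W = ⊤)
    (f : Module.End ℂ V) (hf : ∀ g : G, ρ g * f = f * ρ g) :
    ∃ c : ℂ, f = c • (1 : Module.End ℂ V) := by
  obtain ⟨c, hc⟩ := Module.End.exists_eigenvalue f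
  refine ⟨c, ?_⟩
  have hinv : ∀ g : G, (f.eigenspace c).map (ρ g) ≤ f.eigenspace c := by
    rintro g x ⟨y, hy, rfl⟩
    have hy' : f y = c • y := Module.End.mem_eigenspace_iff.mp hy
    rw [Module.End.mem_eigenspace_iff]
    have h := congrArg (fun T : Module.End ℂ V => T y) (hf g)
    simp only [Module.End.mul_apply] at h
    rw [← h, hy', map_smul]
  have htop : f.eigenspace c = ⊤ := by
    rcases hirr _ hinv with h | h
    · exact absurd h hc
    · exact h
  ext x
  have hx : x ∈ f.eigenspace c := htop ▸ Submodule.mem_top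
  simpa [Module.End.mem_eigenspace_iff] using hx

lemma hn_ne : (finrank ℂ V : ℂ) ≠ 0 :=
  Nat.cast_ne_zero.mpr Module.finrank_pos.ne'

lemma avg_conj
    (hirr : ∀ W : Submodule ℂ V, (∀ g : G, W.map (ρ g) ≤ W) → W = ⊥ ∨ W = ⊤)
    (A : Module.End ℂ V) :
    ∑ b : G, ρ b * A * ρ b⁻¹ =
      ((Fintype.card G : ℂ) * trace ℂ V A / (finrank ℂ V : ℂ)) • 1 := by
  set M := ∑ b : G, ρ b * A * ρ b⁻¹ with hM
  have hcomm : ∀ g : G, ρ g * M = M * ρ g := by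
    intro g
    rw [hM, Finset.mul_sum, Finset.sum_mul]
    refine Fintype.sum_equiv (Equiv.mulLeft g) _ _ fun b => ?_
    have h2 : ρ g⁻¹ * ρ g = 1 := by rw [← map_mul, inv_mul_cancel, map_one]
    simp only [Equiv.coe_mulLeft, mul_inv_rev, map_mul, mul_assoc, h2, mul_one]
  obtain ⟨c, hcEq⟩ := schur_aux ρ hirr M hcomm
  have htr : trace ℂ V M = (Fintype.card G : ℂ) * trace ℂ V A := by
    rw [hM, map_sum]
    have h : ∀ b : G, trace ℂ V (ρ b * A * ρ b⁻¹) = trace ℂ V A := by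
      intro b
      rw [trace_mul_comm, ← mul_assoc, ← map_mul, inv_mul_cancel, map_one, one_mul]
    simp [h, Finset.sum_const, Finset.card_univ, nsmul_eq_mul]
  have htr' : trace ℂ V M = c * (finrank ℂ V : ℂ) := by
    rw [hcEq, map_smul, trace_one, smul_eq_mul]
  have hc : c = (Fintype.card G : ℂ) * trace ℂ V A / (finrank ℂ V : ℂ) := by
    rw [eq_div_iff (hn_ne (V := V)), ← htr', htr]
  rw [hcEq, hc]

lemma char_avg
    (hirr : ∀ W : Submodule ℂ V, (∀ g : G, W.map (ρ g) ≤ W) → W = ⊥ ∨ W = ⊤) :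
    ∑ b : G, trace ℂ V (ρ b) • ρ b⁻¹ =
      ((Fintype.card G : ℂ) / (finrank ℂ V : ℂ)) • (1 : Module.End ℂ V) := by
  classical
  set B := Module.finBasis ℂ V with hB
  apply B.ext
  intro j
  have htrace : ∀ b : G, trace ℂ V (ρ b) = ∑ i, B.repr (ρ b (B i)) i := by
    intro b
    rw [trace_eq_matrix_trace ℂ B, Matrix.trace]
    simp [Matrix.diag, LinearMap.toMatrix_apply]
  have step1 : (∑ b : G, trace ℂ V (ρ b) • ρ b⁻¹) (B j)
      = ∑ i, ∑ b : G, (B.repr (ρ b (B i)) i) • ρ b⁻¹ (B j) := by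
    rw [LinearMap.sum_apply, Finset.sum_comm]
    refine Finset.sum_congr rfl fun b _ => ?_
    rw [LinearMap.smul_apply, htrace b, Finset.sum_smul]
  have step2 : ∀ i, ∑ b : G, (B.repr (ρ b (B i)) i) • ρ b⁻¹ (B j)
      = ((Fintype.card G : ℂ) * (B.repr (B j) i) / (finrank ℂ V : ℂ)) • B i := by
    intro i
    set A : Module.End ℂ V := (B.coord i).smulRight (B j) with hA
    have htrA : trace ℂ V A = B.repr (B j) i := by
      rw [trace_eq_matrix_trace ℂ B, Matrix.trace]
      simp only [Matrix.diag, LinearMap.toMatrix_apply, hA, LinearMap.smulRight_apply,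
        Basis.coord_apply, map_smul, Finsupp.smul_apply, smul_eq_mul]
      rw [Finset.sum_congr rfl (fun k _ => by
        rw [Basis.repr_self, Finsupp.single_apply])]
      simp [Finset.sum_ite_eq, mul_comm]
    have key : ∑ b : G, (B.repr (ρ b (B i)) i) • ρ b⁻¹ (B j)
        = (∑ b : G, ρ b * A * ρ b⁻¹) (B i) := by
      rw [LinearMap.sum_apply]
      refine Fintype.sum_equiv (Equiv.inv G) _ _ fun b => ?_
      simp only [Equiv.inv_apply, Module.End.mul_apply, hA, LinearMap.smulRight_apply,
        Basis.coord_apply, map_smul, inv_inv]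
    rw [key, avg_conj ρ hirr A, htrA]
    simp
  rw [step1, Finset.sum_congr rfl (fun i _ => step2 i), LinearMap.smul_apply,
    Module.End.one_apply]
  rw [Finset.sum_eq_single j]
  · simp [Basis.repr_self]
  · intro i _ hij
    rw [Basis.repr_self, Finsupp.single_apply, if_neg (Ne.symm hij)]
    simp
  · intro h
    exact absurd (Finset.mem_univ j) h

end aux

theorem average_commutator_eq_inv_dim_sq_smul_id
    (G : Type*) [Group G] [Fintype G]
    (V : Type*) [AddCommGroup V] [Module ℂ V] [FiniteDimensional ℂ V] [Nontrivial V]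
    (ρ : Representation ℂ G V)
    (hirr : ∀ W : Submodule ℂ V, (∀ g : G, W.map (ρ g) ≤ W) → W = ⊥ ∨ W = ⊤) :
    (((Fintype.card G : ℂ) ^ 2)⁻¹) • ∑ a : G, ∑ b : G, ρ (a * b * a⁻¹ * b⁻¹) =
      (((Module.finrank ℂ V : ℂ) ^ 2)⁻¹) • (LinearMap.id : V →ₗ[ℂ] V) := by
  classical
  have hn : (finrank ℂ V : ℂ) ≠ 0 := hn_ne (V := V)
  have hcard : (Fintype.card G : ℂ) ≠ 0 :=
    Nat.cast_ne_zero.mpr Fintype.card_pos.ne'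
  have hS : ∑ a : G, ∑ b : G, ρ (a * b * a⁻¹ * b⁻¹)
      = ((Fintype.card G : ℂ) ^ 2 / (finrank ℂ V : ℂ) ^ 2) • (1 : Module.End ℂ V) := by
    rw [Finset.sum_comm]
    have inner : ∀ b : G, ∑ a : G, ρ (a * b * a⁻¹ * b⁻¹)
        = ((Fintype.card G : ℂ) / (finrank ℂ V : ℂ)) • (trace ℂ V (ρ b) • ρ b⁻¹) := by
      intro b
      have h : ∑ a : G, ρ (a * b * a⁻¹ * b⁻¹) = (∑ a : G, ρ a * ρ b * ρ a⁻¹) * ρ b⁻¹ := by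
        rw [Finset.sum_mul]
        exact Finset.sum_congr rfl fun a _ => by rw [map_mul, map_mul, map_mul]
      rw [h, avg_conj ρ hirr (ρ b), smul_mul_assoc, one_mul, smul_smul]
      congr 1
      ring
    rw [Finset.sum_congr rfl (fun b _ => inner b), ← Finset.smul_sum, char_avg ρ hirr,
      smul_smul]
    congr 1
    field_simp
  rw [hS, smul_smul]
  have h : ((Fintype.card G : ℂ) ^ 2)⁻¹ * ((Fintype.card G : ℂ) ^ 2 / (finrank ℂ V : ℂ) ^ 2)
      = ((finrank ℂ V : ℂ) ^ 2)⁻¹ := by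
    field_simp
  rw [h]
  rfl
end

section
/- Let G be a finite group, ρ : G → GL(V) an irreducible complex representation, and γ ≥ 1. Then (1/|G|^{2γ}) ∑ over (t_1,...,t_{2γ}) ∈ G^{2γ} of ρ([t_1,t_2][t_3,t_4]⋯[t_{2γ−1},t_{2γ}]) = (dim V)^{−2γ} · Id, where [a,b] = aba⁻¹b⁻¹. -/
open LinearMap Finset

set_option linter.unusedSectionVars false

section aux

variable {G : Type*} [Group G] [Fintype G]
  {V : Type*} [AddCommGroup V] [Module ℂ V] [FiniteDimensional ℂ V] [Nontrivial V]
  (ρ : Representation ℂ G V)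

private theorem aux_finrank_ne_zero : (Module.finrank ℂ V : ℂ) ≠ 0 := by
  exact_mod_cast Nat.cast_ne_zero.mpr (Module.finrank_pos (R := ℂ) (M := V)).ne'

/-- Schur: an endomorphism commuting with the representation is scalar. -/
private theorem aux_schur
    (hirr : ∀ W : Submodule ℂ V, (∀ g : G, W.map (ρ g) ≤ W) → W = ⊥ ∨ W = ⊤)
    (B : V →ₗ[ℂ] V) (hB : ∀ g : G, ρ g * B = B * ρ g) :
    B = ((LinearMap.trace ℂ V B) / (Module.finrank ℂ V : ℂ)) • 1 := by
  obtain ⟨μ, hμ⟩ := Module.End.exists_eigenvalue (B : Module.End ℂ V)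
  have hW : Module.End.eigenspace B μ = ⊤ := by
    have hinv : ∀ g : G, (Module.End.eigenspace B μ).map (ρ g) ≤ Module.End.eigenspace B μ := by
      intro g x hx
      obtain ⟨v, hv, rfl⟩ := hx
      simp only [SetLike.mem_coe, Module.End.mem_eigenspace_iff] at hv ⊢
      have := congrArg (fun f : V →ₗ[ℂ] V => f v) (hB g)
      simp only [Module.End.mul_apply] at this
      rw [← this, hv, LinearMap.map_smul]
    rcases hirr _ hinv with h | h
    · exact absurd h hμ
    · exact h
  have hBμ : B = μ • 1 := by
    ext v
    have : v ∈ Module.End.eigenspace B μ := hW ▸ Submodule.mem_top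
    simpa [Module.End.mem_eigenspace_iff] using this
  have ht : LinearMap.trace ℂ V B = μ * (Module.finrank ℂ V : ℂ) := by
    rw [hBμ, LinearMap.map_smul, LinearMap.trace_one, smul_eq_mul]
  rw [ht, mul_div_cancel_right₀ _ (aux_finrank_ne_zero (V := V)), ← hBμ]


/-- The average of conjugates of any endomorphism is scalar. -/
private theorem aux_conj_sum
    (hirr : ∀ W : Submodule ℂ V, (∀ g : G, W.map (ρ g) ≤ W) → W = ⊥ ∨ W = ⊤)
    (A : V →ₗ[ℂ] V) :
    ∑ g : G, ρ g * A * ρ g⁻¹ =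
      ((Fintype.card G : ℂ) * LinearMap.trace ℂ V A / (Module.finrank ℂ V : ℂ)) • 1 := by
  have hcomm : ∀ h : G, ρ h * (∑ g : G, ρ g * A * ρ g⁻¹) = (∑ g : G, ρ g * A * ρ g⁻¹) * ρ h := by
    intro h
    rw [Finset.mul_sum, Finset.sum_mul]
    refine Fintype.sum_equiv (Equiv.mulLeft h) _ _ fun g => ?_
    show ρ h * (ρ g * A * ρ g⁻¹) = ρ (h * g) * A * ρ ((h * g)⁻¹) * ρ h
    have hone : ρ h⁻¹ * ρ h = 1 := by rw [← _root_.map_mul, inv_mul_cancel, map_one]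
    rw [_root_.map_mul, mul_inv_rev, _root_.map_mul]
    simp only [mul_assoc, hone, mul_one]
  have htr : LinearMap.trace ℂ V (∑ g : G, ρ g * A * ρ g⁻¹)
      = (Fintype.card G : ℂ) * LinearMap.trace ℂ V A := by
    rw [map_sum]
    have : ∀ g : G, LinearMap.trace ℂ V (ρ g * A * ρ g⁻¹) = LinearMap.trace ℂ V A := by
      intro g
      rw [LinearMap.trace_mul_comm, ← mul_assoc, ← _root_.map_mul, inv_mul_cancel, map_one, one_mul]
    simp [this, Finset.card_univ]
  rw [aux_schur ρ hirr _ hcomm, htr]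

private theorem aux_orth
    (hirr : ∀ W : Submodule ℂ V, (∀ g : G, W.map (ρ g) ≤ W) → W = ⊥ ∨ W = ⊤) :
    ∑ g : G, LinearMap.trace ℂ V (ρ g) * LinearMap.trace ℂ V (ρ g⁻¹)
      = (Fintype.card G : ℂ) := by
  classical
  set n := Module.finrank ℂ V with hn
  let b := Module.finBasis ℂ V
  let e := LinearMap.toMatrixAlgEquiv b
  let M : G → Matrix (Fin n) (Fin n) ℂ := fun g => e (ρ g)
  have htr : ∀ f : V →ₗ[ℂ] V, LinearMap.trace ℂ V f = Matrix.trace (e f) := by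
    intro f
    rw [LinearMap.trace_eq_matrix_trace ℂ b]
    rfl
  have key : ∀ p q i j : Fin n,
      ∑ g : G, M g i p * M g⁻¹ q j
        = ((Fintype.card G : ℂ) * (if p = q then 1 else 0) / (n : ℂ))
            * (if i = j then 1 else 0) := by
    intro p q i j
    have h0 := aux_conj_sum ρ hirr (e.symm (Matrix.single p q 1))
    have h1 := congrArg e h0
    rw [map_sum, map_smul, map_one] at h1
    have h2 : LinearMap.trace ℂ V (e.symm (Matrix.single p q 1))
        = if p = q then 1 else 0 := by
      rw [htr, AlgEquiv.apply_symm_apply]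
      by_cases hpq : p = q
      · subst hpq; simp [Matrix.trace_single_eq_same]
      · simp [Matrix.trace_single_eq_of_ne _ _ _ hpq, hpq]
    rw [h2] at h1
    have h3 : ∀ g : G, e (ρ g * e.symm (Matrix.single p q 1) * ρ g⁻¹)
        = M g * Matrix.single p q 1 * M g⁻¹ := by
      intro g
      rw [_root_.map_mul, _root_.map_mul, AlgEquiv.apply_symm_apply]
    rw [Finset.sum_congr rfl fun g _ => h3 g] at h1
    have h4 := congrArg (fun X : Matrix (Fin n) (Fin n) ℂ => X i j) h1
    simp only [Matrix.sum_apply, Matrix.smul_apply, Matrix.one_apply, smul_eq_mul] at h4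
    have hent : ∀ A B : Matrix (Fin n) (Fin n) ℂ,
        (A * Matrix.single p q (1 : ℂ) * B) i j = A i p * B q j := by
      intro A B
      rw [Matrix.mul_apply, Finset.sum_eq_single q]
      · rw [Matrix.mul_single_apply_same, mul_one]
      · intro k _ hk
        rw [Matrix.mul_single_apply_of_ne (hbj := hk), zero_mul]
      · simp
    rw [Finset.sum_congr rfl fun g _ => hent (M g) (M g⁻¹)] at h4
    simpa using h4
  have hMtr : ∀ g : G, LinearMap.trace ℂ V (ρ g) = ∑ i : Fin n, M g i i := by
    intro g
    rw [htr]
    rfl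
  calc ∑ g : G, LinearMap.trace ℂ V (ρ g) * LinearMap.trace ℂ V (ρ g⁻¹)
      = ∑ g : G, ∑ i : Fin n, ∑ j : Fin n, M g i i * M g⁻¹ j j := by
        refine Finset.sum_congr rfl fun g _ => ?_
        rw [hMtr g, hMtr g⁻¹, Finset.sum_mul_sum]
    _ = ∑ i : Fin n, ∑ j : Fin n, ∑ g : G, M g i i * M g⁻¹ j j := by
        rw [Finset.sum_comm]
        exact Finset.sum_congr rfl fun i _ => Finset.sum_comm
    _ = ∑ i : Fin n, ∑ j : Fin n,
          ((Fintype.card G : ℂ) * (if i = j then 1 else 0) / (n : ℂ))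
            * (if i = j then 1 else 0) := by
        exact Finset.sum_congr rfl fun i _ => Finset.sum_congr rfl fun j _ => key i j i j
    _ = ∑ _i : Fin n, (Fintype.card G : ℂ) / (n : ℂ) := by
        refine Finset.sum_congr rfl fun i _ => ?_
        rw [Finset.sum_eq_single i] <;> simp +contextual [Ne.symm]
    _ = (Fintype.card G : ℂ) := by
        rw [Finset.sum_const, Finset.card_univ, Fintype.card_fin, nsmul_eq_mul,
          mul_comm, div_mul_cancel₀ _ (aux_finrank_ne_zero (V := V))]

private theorem aux_comm_sum
    (hirr : ∀ W : Submodule ℂ V, (∀ g : G, W.map (ρ g) ≤ W) → W = ⊥ ∨ W = ⊤) :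
    ∑ p : G × G, ρ (p.1 * p.2 * p.1⁻¹ * p.2⁻¹)
      = ((Fintype.card G : ℂ) ^ 2 / (Module.finrank ℂ V : ℂ) ^ 2) • 1 := by
  have hE : ∑ p : G × G, ρ (p.1 * p.2 * p.1⁻¹ * p.2⁻¹)
      = ∑ t : G, ((Fintype.card G : ℂ) * LinearMap.trace ℂ V (ρ t)
          / (Module.finrank ℂ V : ℂ)) • ρ t⁻¹ := by
    rw [Fintype.sum_prod_type_right]
    refine Finset.sum_congr rfl fun t _ => ?_
    have : ∀ s : G, ρ (s * t * s⁻¹ * t⁻¹) = (ρ s * ρ t * ρ s⁻¹) * ρ t⁻¹ := by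
      intro s
      rw [_root_.map_mul, _root_.map_mul, _root_.map_mul]
    rw [Finset.sum_congr rfl fun s _ => this s, ← Finset.sum_mul,
      aux_conj_sum ρ hirr (ρ t), smul_mul_assoc, one_mul]
  have hcomm : ∀ g : G, ρ g * (∑ p : G × G, ρ (p.1 * p.2 * p.1⁻¹ * p.2⁻¹))
      = (∑ p : G × G, ρ (p.1 * p.2 * p.1⁻¹ * p.2⁻¹)) * ρ g := by
    intro g
    rw [Finset.mul_sum, Finset.sum_mul]
    refine Fintype.sum_equiv
      (Equiv.prodCongr (MulAut.conj g).toEquiv (MulAut.conj g).toEquiv) _ _ fun p => ?_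
    show ρ g * ρ (p.1 * p.2 * p.1⁻¹ * p.2⁻¹)
      = ρ ((g * p.1 * g⁻¹) * (g * p.2 * g⁻¹) * (g * p.1 * g⁻¹)⁻¹ * (g * p.2 * g⁻¹)⁻¹) * ρ g
    rw [← _root_.map_mul, ← _root_.map_mul]
    congr 1
    group
  have htrE : LinearMap.trace ℂ V (∑ p : G × G, ρ (p.1 * p.2 * p.1⁻¹ * p.2⁻¹))
      = (Fintype.card G : ℂ) * (Fintype.card G : ℂ) / (Module.finrank ℂ V : ℂ) := by
    rw [hE, map_sum]
    have : ∀ t : G, LinearMap.trace ℂ V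
        ((((Fintype.card G : ℂ) * LinearMap.trace ℂ V (ρ t)
          / (Module.finrank ℂ V : ℂ))) • ρ t⁻¹)
        = ((Fintype.card G : ℂ) / (Module.finrank ℂ V : ℂ))
            * (LinearMap.trace ℂ V (ρ t) * LinearMap.trace ℂ V (ρ t⁻¹)) := by
      intro t
      rw [LinearMap.map_smul, smul_eq_mul]
      ring
    rw [Finset.sum_congr rfl fun t _ => this t, ← Finset.mul_sum, aux_orth ρ hirr]
    ring
  rw [aux_schur ρ hirr _ hcomm, htrE, sq, sq, div_div]

private theorem aux_pow
    (hirr : ∀ W : Submodule ℂ V, (∀ g : G, W.map (ρ g) ≤ W) → W = ⊥ ∨ W = ⊤)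
    (γ : ℕ) :
    ∑ t : Fin γ → G × G,
        ρ ((List.ofFn (fun j => (t j).1 * (t j).2 * ((t j).1)⁻¹ * ((t j).2)⁻¹)).prod)
      = (((Fintype.card G : ℂ) ^ 2 / (Module.finrank ℂ V : ℂ) ^ 2) ^ γ) • 1 := by
  induction γ with
  | zero => simp
  | succ m ih =>
    have key : ∀ (a : G × G) (f : Fin m → G × G),
        ρ ((List.ofFn (fun j : Fin (m + 1) =>
            (Fin.cons (α := fun _ => G × G) a f j).1 * (Fin.cons (α := fun _ => G × G) a f j).2
              * ((Fin.cons (α := fun _ => G × G) a f j).1)⁻¹ * ((Fin.cons (α := fun _ => G × G) a f j).2)⁻¹)).prod)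
          = ρ (a.1 * a.2 * a.1⁻¹ * a.2⁻¹)
            * ρ ((List.ofFn (fun j : Fin m =>
                (f j).1 * (f j).2 * ((f j).1)⁻¹ * ((f j).2)⁻¹)).prod) := by
      intro a f
      rw [List.ofFn_succ, List.prod_cons, _root_.map_mul]
      simp [Fin.cons_succ, Fin.cons_zero]
    have hsplit := Fintype.sum_equiv (Fin.consEquiv (fun _ : Fin (m + 1) => G × G))
      (fun y : (G × G) × (Fin m → G × G) =>
        ρ ((List.ofFn (fun j : Fin (m + 1) =>
            (Fin.cons (α := fun _ => G × G) y.1 y.2 j).1 * (Fin.cons (α := fun _ => G × G) y.1 y.2 j).2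
              * ((Fin.cons (α := fun _ => G × G) y.1 y.2 j).1)⁻¹ * ((Fin.cons (α := fun _ => G × G) y.1 y.2 j).2)⁻¹)).prod))
      (fun t : Fin (m + 1) → G × G =>
        ρ ((List.ofFn (fun j : Fin (m + 1) =>
            (t j).1 * (t j).2 * ((t j).1)⁻¹ * ((t j).2)⁻¹)).prod))
      (fun y => rfl)
    rw [← hsplit, Fintype.sum_prod_type,
      Finset.sum_congr rfl fun a _ => Finset.sum_congr rfl fun f _ => key a f,
      ← Finset.sum_mul_sum, aux_comm_sum ρ hirr, ih, smul_mul_smul_comm, one_mul, ← pow_succ']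

end aux

theorem average_product_of_commutators_eq_dim_pow_smul_id
    (G : Type*) [Group G] [Fintype G]
    (V : Type*) [AddCommGroup V] [Module ℂ V] [FiniteDimensional ℂ V] [Nontrivial V]
    (ρ : Representation ℂ G V)
    (hirr : ∀ W : Submodule ℂ V, (∀ g : G, W.map (ρ g) ≤ W) → W = ⊥ ∨ W = ⊤)
    (γ : ℕ) (hγ : 1 ≤ γ) :
    (((Fintype.card G : ℂ) ^ (2 * γ))⁻¹) •
        ∑ t : Fin γ → G × G,
          ρ ((List.ofFn (fun j => (t j).1 * (t j).2 * ((t j).1)⁻¹ * ((t j).2)⁻¹)).prod) =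
      (((Module.finrank ℂ V : ℂ) ^ (2 * γ))⁻¹) • (LinearMap.id : V →ₗ[ℂ] V) := by
  rw [aux_pow ρ hirr γ, smul_smul, ← Module.End.one_eq_id]
  congr 1
  have hc : (Fintype.card G : ℂ) ≠ 0 := Nat.cast_ne_zero.mpr Fintype.card_ne_zero
  have hn : (Module.finrank ℂ V : ℂ) ≠ 0 := aux_finrank_ne_zero (V := V)
  rw [div_pow, ← pow_mul, ← pow_mul]
  field_simp
end

section
/- If G is a finite group and V is an irreducible complex representation of G, then dim V divides |G|. -/
open CategoryTheory Module FDRep MonoidAlgebra Polynomial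

noncomputable section AuxDimDvd

namespace DimDvdAux

lemma integral_of_pow_eq_one {μ : ℂ} {k : ℕ} (hk : k ≠ 0) (h : μ ^ k = 1) : IsIntegral ℤ μ := by
  refine ⟨X ^ k - C 1, Polynomial.monic_X_pow_sub_C 1 hk, ?_⟩
  simp [h]

lemma multiset_sum_integral {s : Multiset ℂ} (h : ∀ x ∈ s, IsIntegral ℤ x) :
    IsIntegral ℤ s.sum := by
  induction s using Multiset.induction with
  | empty => simpa using isIntegral_zero
  | cons a s ih =>
    rw [Multiset.sum_cons]
    exact (h a (Multiset.mem_cons_self a s)).add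
      (ih fun x hx => h x (Multiset.mem_cons_of_mem hx))

variable {G : Type} [Group G] [Fintype G] (V : FDRep ℂ G)

/-- The algebra map from the integral group ring. -/
abbrev piV : MonoidAlgebra ℤ G →ₐ[ℤ] Module.End ℂ V := MonoidAlgebra.lift ℤ _ G (V.ρ)

lemma piV_integral (z : MonoidAlgebra ℤ G) (hz : z ∈ Subalgebra.center ℤ (MonoidAlgebra ℤ G)) :
    IsIntegral ℤ (piV V z) := by
  have hfg : (Subalgebra.center ℤ (MonoidAlgebra ℤ G)).toSubmodule.FG := by
    have : Module.Finite ℤ (MonoidAlgebra ℤ G) := by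
      infer_instance
    exact IsNoetherian.noetherian _
  refine IsIntegral.of_mem_of_fg ((Subalgebra.center ℤ (MonoidAlgebra ℤ G)).map (piV V)) ?_ _
    ⟨z, hz, rfl⟩
  have : ((Subalgebra.center ℤ (MonoidAlgebra ℤ G)).map (piV V)).toSubmodule
      = Submodule.map (piV V).toLinearMap (Subalgebra.center ℤ (MonoidAlgebra ℤ G)).toSubmodule :=
    rfl
  rw [this]
  exact Submodule.FG.map _ hfg

omit [Fintype G] in
lemma V_nontrivial (hV : Simple V) : Nontrivial V := by
  by_contra h
  have hs : Subsingleton V := not_nontrivial_iff_subsingleton.mp h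
  have h1 : (𝟙 V : V ⟶ V) = 0 := by
    apply Action.hom_ext
    ext v
    exact hs.elim _ _
  exact CategoryTheory.id_nonzero V h1

omit [Fintype G] in
lemma integral_of_smul_id (hV : Simple V) (c : ℂ)
    (h : IsIntegral ℤ ((c • 1 : Module.End ℂ V))) : IsIntegral ℤ c := by
  have := V_nontrivial V hV
  obtain ⟨p, hp, hp0⟩ := h
  refine ⟨p, hp, ?_⟩
  have hc : (c • 1 : Module.End ℂ V) = algebraMap ℂ (Module.End ℂ V) c := by
    simp [Algebra.algebraMap_eq_smul_one]
  have key : algebraMap ℂ (Module.End ℂ V) (Polynomial.aeval c p) = 0 := by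
    rw [← Polynomial.aeval_algebraMap_apply, ← hc]; exact hp0
  obtain ⟨v, hv⟩ := exists_ne (0 : V)
  have h2 := congrArg (fun f => (f : Module.End ℂ V) v) key
  simp only [Module.algebraMap_end_apply, LinearMap.zero_apply] at h2
  rcases smul_eq_zero.mp h2 with h | h
  · exact h
  · exact absurd h hv

lemma char_integral (g : G) : IsIntegral ℤ (V.character g) := by
  classical
  set b := Module.finBasis ℂ V
  set M := LinearMap.toMatrix b b (V.ρ g) with hM
  have htr : V.character g = M.trace := LinearMap.trace_eq_matrix_trace ℂ b (V.ρ g)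
  rw [htr, Matrix.trace_eq_sum_roots_charpoly]
  refine multiset_sum_integral fun μ hμ => ?_
  refine integral_of_pow_eq_one (k := orderOf g) (orderOf_pos g).ne' ?_
  have hroot : M.charpoly.IsRoot μ := (Polynomial.mem_roots (M.charpoly_monic.ne_zero)).mp hμ
  have hdet : ((Matrix.scalar _ μ) - M).det = 0 := by
    have : ((Matrix.scalar _ μ) - M)
        = (Polynomial.evalRingHom μ).mapMatrix (Matrix.charmatrix M) := by
      ext i j
      by_cases h : i = j <;>
        simp [h, Matrix.charmatrix_apply, Matrix.diagonal, Matrix.scalar]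
    rw [this, ← RingHom.map_det]
    exact hroot
  have hnu : ¬ IsUnit ((Matrix.scalar _ μ) - M) := by
    rw [Matrix.isUnit_iff_isUnit_det, hdet]
    exact not_isUnit_zero
  have hspec : μ ∈ spectrum ℂ M := by
    rw [spectrum.mem_iff]
    have : algebraMap ℂ (Matrix (Fin (finrank ℂ V)) (Fin (finrank ℂ V)) ℂ) μ
        = Matrix.scalar _ μ := rfl
    rw [this]
    exact hnu
  have hspec2 : μ ∈ spectrum ℂ (V.ρ g) := by
    have he : M = LinearMap.toMatrixAlgEquiv b (V.ρ g) := rfl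
    rw [he, AlgEquiv.spectrum_eq] at hspec
    exact hspec
  have heig : Module.End.HasEigenvalue (V.ρ g) μ :=
    (Module.End.hasEigenvalue_iff_mem_spectrum).mpr hspec2
  obtain ⟨v, hv⟩ := heig.exists_hasEigenvector
  have hpow : ((V.ρ g) ^ orderOf g) v = μ ^ orderOf g • v := hv.pow_apply _
  have h1 : ((V.ρ g) ^ orderOf g) = 1 := by
    rw [← map_pow, pow_orderOf_eq_one, map_one]
  rw [h1] at hpow
  have hz : (μ ^ orderOf g - 1) • v = 0 := by
    rw [sub_smul, one_smul, ← hpow]; simp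
  rcases smul_eq_zero.mp hz with h | h
  · exact sub_eq_zero.mp h
  · exact absurd h hv.2

omit [Fintype G] in
lemma char_isconj {g h : G} (hgh : IsConj g h) : V.character g = V.character h := by
  obtain ⟨x, hx⟩ := isConj_iff.mp hgh
  rw [← hx, FDRep.char_conj]

open Classical in
/-- The class sum in the integral group ring. -/
def classSum (c : ConjClasses G) : MonoidAlgebra ℤ G :=
  ∑ g ∈ Finset.univ.filter (fun g => ConjClasses.mk g = c), MonoidAlgebra.of ℤ G g

open Classical in
lemma conj_mem_fiber {c : ConjClasses G} {g : G} (x : G)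
    (hg : g ∈ Finset.univ.filter (fun g => ConjClasses.mk g = c)) :
    x * g * x⁻¹ ∈ Finset.univ.filter (fun g => ConjClasses.mk g = c) := by
  simp only [Finset.mem_filter, Finset.mem_univ, true_and] at hg ⊢
  rw [← hg, ConjClasses.mk_eq_mk_iff_isConj]
  exact (isConj_iff.mpr ⟨x, rfl⟩).symm

lemma classSum_central (c : ConjClasses G) :
    classSum (G := G) c ∈ Subalgebra.center ℤ (MonoidAlgebra ℤ G) := by
  classical
  rw [Subalgebra.mem_center_iff]
  have key : ∀ x : G, MonoidAlgebra.of ℤ G x * classSum c = classSum c * MonoidAlgebra.of ℤ G x := by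
    intro x
    unfold classSum
    rw [Finset.mul_sum, Finset.sum_mul]
    simp only [← map_mul]
    refine Finset.sum_nbij' (fun g => x * g * x⁻¹) (fun g => x⁻¹ * g * x) ?_ ?_ ?_ ?_ ?_
    · intro g hg; exact conj_mem_fiber x hg
    · intro g hg
      have := conj_mem_fiber (c := c) x⁻¹ (by simpa using hg)
      simpa using this
    · intro g hg; group
    · intro g hg; group
    · intro g hg; congr 1; group
  intro b
  induction b using MonoidAlgebra.induction_linear with
  | zero => simp
  | add f g hf hg => rw [add_mul, mul_add, hf, hg]
  | single a r =>
    have : (MonoidAlgebra.single a r : MonoidAlgebra ℤ G)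
        = r • MonoidAlgebra.of ℤ G a := by
      simp [MonoidAlgebra.of_apply, MonoidAlgebra.smul_single']
    rw [this, smul_mul_assoc, mul_smul_comm, key]

omit [Fintype G] in
lemma char_isconj_inv {g h : G} (hgh : IsConj g h) :
    V.character g⁻¹ = V.character h⁻¹ := by
  refine char_isconj V ?_
  obtain ⟨x, hx⟩ := isConj_iff.mp hgh
  exact isConj_iff.mpr ⟨x, by rw [← hx]; group⟩

omit [Fintype G] in
lemma piV_of (g : G) : piV V (MonoidAlgebra.of ℤ G g) = V.ρ g := MonoidAlgebra.lift_of _ _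

open Classical in
lemma class_omega (hV : Simple V) (c : ConjClasses G) :
    ∃ ω : ℂ, IsIntegral ℤ ω ∧
      ∑ g ∈ Finset.univ.filter (fun g => ConjClasses.mk g = c), V.character g
        = ω * (finrank ℂ V : ℂ) := by
  set f := piV V (classSum c) with hfdef
  have hcomm : ∀ x : G, f ∘ₗ V.ρ x = V.ρ x ∘ₗ f := by
    intro x
    have h1 : MonoidAlgebra.of ℤ G x * classSum c = classSum c * MonoidAlgebra.of ℤ G x :=
      Subalgebra.mem_center_iff.mp (classSum_central c) _
    have h2 := congrArg (piV V) h1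
    rw [map_mul, map_mul, piV_of] at h2
    have h3 : V.ρ x * f = f * V.ρ x := h2
    calc f ∘ₗ V.ρ x = f * V.ρ x := rfl
    _ = V.ρ x * f := h3.symm
    _ = V.ρ x ∘ₗ f := rfl
  let F : V ⟶ V := ⟨FGModuleCat.ofHom f, fun x => by
    ext v
    exact LinearMap.congr_fun (hcomm x) v⟩
  obtain ⟨ω, hω⟩ := CategoryTheory.endomorphism_simple_eq_smul_id ℂ F
  have hf : f = ω • LinearMap.id := by
    have := congrArg (fun φ : V ⟶ V => φ.hom.hom.hom) hω
    exact this.symm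
  refine ⟨ω, ?_, ?_⟩
  · refine integral_of_smul_id V hV ω ?_
    have : (ω • 1 : Module.End ℂ V) = f := by
      rw [hf]; rfl
    rw [this]
    exact piV_integral V _ (classSum_central c)
  · have ht1 : LinearMap.trace ℂ V f
        = ∑ g ∈ Finset.univ.filter (fun g => ConjClasses.mk g = c), V.character g := by
      rw [hfdef]
      unfold classSum
      rw [map_sum, map_sum]
      refine Finset.sum_congr rfl fun g _ => ?_
      rw [piV_of]
      rfl
    have ht2 : LinearMap.trace ℂ V f = ω * (finrank ℂ V : ℂ) := by
      rw [hf, map_smul, LinearMap.trace_id, smul_eq_mul]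
    rw [← ht1, ht2]

lemma sum_char_mul_char_inv (hV : Simple V) :
    ∑ g : G, V.character g * V.character g⁻¹ = Fintype.card G := by
  have hc : (Fintype.card G : ℂ) ≠ 0 := by exact_mod_cast Fintype.card_ne_zero
  have h := FDRep.char_orthonormal (k := ℂ) (G := G) V V
  rw [if_pos ⟨Iso.refl _⟩, Nat.card_eq_fintype_card, inv_mul_eq_iff_eq_mul₀ hc] at h
  simpa using h

end DimDvdAux

end AuxDimDvd

theorem finrank_dvd_card_of_simple
    (G : Type) [Group G] [Fintype G]
    (V : FDRep ℂ G) (hV : CategoryTheory.Simple V) :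
    Module.finrank ℂ V ∣ Fintype.card G := by
  classical
  open DimDvdAux in
  have hnt : Nontrivial V := V_nontrivial V hV
  set n := Module.finrank ℂ V with hn
  have hn0 : 0 < n := finrank_pos
  have hnC : (n : ℂ) ≠ 0 := Nat.cast_ne_zero.mpr hn0.ne'
  -- choose representatives and eigenvalues
  choose ω hωint hωsum using class_omega V hV
  set r : ConjClasses G → G := fun c => (ConjClasses.exists_rep c).choose with hr
  have hrspec : ∀ c, ConjClasses.mk (r c) = c := fun c => (ConjClasses.exists_rep c).choose_spec
  -- the key sum
  have horth := sum_char_mul_char_inv V hV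
  have hfib : ∑ c : ConjClasses G, ∑ g ∈ Finset.univ.filter (fun g => ConjClasses.mk g = c),
        V.character g * V.character g⁻¹
      = ∑ g : G, V.character g * V.character g⁻¹ := by
    rw [Finset.sum_fiberwise_eq_sum_filter]
    simp
  have hclass : ∀ c : ConjClasses G,
      ∑ g ∈ Finset.univ.filter (fun g => ConjClasses.mk g = c),
        V.character g * V.character g⁻¹
      = V.character (r c)⁻¹ * (ω c * (n : ℂ)) := by
    intro c
    rw [← hωsum c, Finset.mul_sum]
    refine Finset.sum_congr rfl fun g hg => ?_
    have hgc : ConjClasses.mk g = c := by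
      simpa using (Finset.mem_filter.mp hg).2
    have hconj : IsConj (r c) g := by
      rw [← ConjClasses.mk_eq_mk_iff_isConj, hrspec c, hgc]
    rw [char_isconj_inv V hconj, mul_comm]
  have hcard : (Fintype.card G : ℂ)
      = (∑ c : ConjClasses G, V.character (r c)⁻¹ * ω c) * (n : ℂ) := by
    rw [Finset.sum_mul]
    rw [← horth, ← hfib]
    refine Finset.sum_congr rfl fun c _ => ?_
    rw [hclass c, mul_assoc]
  set A := ∑ c : ConjClasses G, V.character (r c)⁻¹ * ω c with hA
  have hAint : IsIntegral ℤ A :=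
    IsIntegral.sum _ fun c _ => (char_integral V _).mul (hωint c)
  -- descend to ℚ
  set q : ℚ := (Fintype.card G : ℚ) / (n : ℚ) with hq
  have hqC : (algebraMap ℚ ℂ) q = A := by
    rw [hq]
    push_cast
    rw [div_eq_iff hnC]
    exact hcard
  have hqint : IsIntegral ℤ q := by
    rw [← isIntegral_algebraMap_iff (algebraMap ℚ ℂ).injective, hqC]
    exact hAint
  obtain ⟨y, hy⟩ := IsIntegrallyClosed.isIntegral_iff.mp hqint
  have hyq : (y : ℚ) = q := by exact_mod_cast hy
  have hmul : (Fintype.card G : ℚ) = (n : ℚ) * y := by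
    rw [hyq, hq, mul_div_cancel₀]
    exact Nat.cast_ne_zero.mpr hn0.ne'
  have hy0 : 0 ≤ y := by
    have : (0:ℚ) ≤ (y:ℚ) := by
      rw [hyq, hq]
      positivity
    exact_mod_cast this
  refine ⟨y.toNat, ?_⟩
  have hyy : ((y.toNat : ℕ) : ℚ) = (y : ℚ) := by
    exact_mod_cast congrArg (fun z : ℤ => (z : ℚ)) (Int.toNat_of_nonneg hy0)
  have : (Fintype.card G : ℚ) = ((n * y.toNat : ℕ) : ℚ) := by
    rw [Nat.cast_mul, hyy]
    exact hmul
  exact_mod_cast this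
end

section
/- For a finite group G, the number of elements g ∈ G with g² = 1 equals ∑_{ρ ∈ Irr(G)} ν(χ_ρ) dim ρ, where ν is the Frobenius–Schur indicator. -/
open CategoryTheory Module Representation MonoidAlgebra LinearMap

noncomputable section FSaux

variable {G : Type} [Group G]

/-- Restriction of a representation to an invariant subspace. -/
def FSsubRep {V : Type} [AddCommGroup V] [Module ℂ V]
    (ρ : Representation ℂ G V) (p : Submodule ℂ V)
    (hp : ∀ g : G, ∀ x ∈ p, ρ g x ∈ p) : Representation ℂ G p where
  toFun g := (ρ g).restrict (fun x hx => hp g x hx)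
  map_one' := by ext x; simp [LinearMap.restrict_apply]
  map_mul' g h := by ext x; simp [LinearMap.restrict_apply]

lemma FSsubRep_eq {V : Type} [AddCommGroup V] [Module ℂ V]
    (ρ : Representation ℂ G V) (p : Submodule ℂ V)
    (hp : ∀ g : G, ∀ x ∈ p, ρ g x ∈ p) (h : G) :
    FSsubRep ρ p hp h = (ρ h).restrict (hp h) := rfl

lemma FSsimple {V : Type} [AddCommGroup V] [Module ℂ V] [FiniteDimensional ℂ V] [Nontrivial V]
    (ρ : Representation ℂ G V)
    (hs : ∀ p : Submodule ℂ V, (∀ g : G, ∀ x ∈ p, ρ g x ∈ p) → p = ⊥ ∨ p = ⊤) :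
    Simple (FDRep.of ρ) := by
  constructor
  intro Y f hf
  constructor
  · intro hiso h0
    obtain ⟨v, hv⟩ := exists_ne (0 : V)
    obtain ⟨g, hg1, hg2⟩ := hiso.out
    rw [h0, Limits.comp_zero] at hg2
    have h2 := congrArg Action.Hom.hom hg2
    rw [Action.zero_hom, Action.id_hom] at h2
    apply hv
    have h3 := congrArg (fun (φ : (FDRep.of ρ).V ⟶ (FDRep.of ρ).V) => φ v) h2
    exact h3.symm
  · intro hne
    have hcomm : ∀ (g : G) (y : Y), f.hom (Y.ρ g y) = ρ g (f.hom y) := by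
      intro g y
      have := congrArg (fun (φ : Y.V ⟶ (FDRep.of ρ).V) => φ y) (f.comm g)
      exact this
    have hφ : (ConcreteCategory.hom f.hom : Y →ₗ[ℂ] V) ≠ 0 := by
      intro h
      exact hne (Action.hom_ext f 0 (by rw [Action.zero_hom]; exact FGModuleCat.hom_ext h))
    -- surjectivity
    have hsurj : Function.Surjective (ConcreteCategory.hom f.hom : Y →ₗ[ℂ] V) := by
      rw [← LinearMap.range_eq_top]
      have hinv : ∀ g : G, ∀ x ∈ LinearMap.range (ConcreteCategory.hom f.hom : Y →ₗ[ℂ] V),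
          ρ g x ∈ LinearMap.range (ConcreteCategory.hom f.hom : Y →ₗ[ℂ] V) := by
        rintro g x ⟨y, rfl⟩
        exact ⟨Y.ρ g y, hcomm g y⟩
      rcases hs (LinearMap.range (ConcreteCategory.hom f.hom : Y →ₗ[ℂ] V)) hinv with h | h
      · exfalso
        apply hφ
        ext y
        have : f.hom y ∈ LinearMap.range (ConcreteCategory.hom f.hom : Y →ₗ[ℂ] V) := ⟨y, rfl⟩
        rw [h] at this
        simpa using this
      · exact h
    -- injectivity
    have hKinv : ∀ g : G, ∀ x ∈ LinearMap.ker (ConcreteCategory.hom f.hom : Y →ₗ[ℂ] V),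
        Y.ρ g x ∈ LinearMap.ker (ConcreteCategory.hom f.hom : Y →ₗ[ℂ] V) := by
      intro g x hx
      rw [LinearMap.mem_ker] at hx ⊢
      exact (hcomm g x).trans (by rw [hx, map_zero])
    have hinj : Function.Injective (ConcreteCategory.hom f.hom : Y →ₗ[ℂ] V) := by
      rw [← LinearMap.ker_eq_bot]
      set K := LinearMap.ker (ConcreteCategory.hom f.hom : Y →ₗ[ℂ] V)
      let κ : FDRep.of (FSsubRep Y.ρ K hKinv) ⟶ Y :=
        ⟨FGModuleCat.ofHom K.subtype, by intro g; rfl⟩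
      have hκf : κ ≫ f = 0 := by
        apply Action.hom_ext
        rw [Action.comp_hom, Action.zero_hom]
        ext x
        exact LinearMap.mem_ker.mp x.2
      have hκ : κ = 0 := by
        rw [← cancel_mono f, hκf, Limits.zero_comp]
      rw [eq_bot_iff]
      intro x hx
      have : κ.hom ⟨x, hx⟩ = x := rfl
      rw [hκ, Action.zero_hom] at this
      exact this.symm
    -- build the inverse
    let e : (Y : Type) ≃ₗ[ℂ] V := LinearEquiv.ofBijective (ConcreteCategory.hom f.hom : Y →ₗ[ℂ] V) ⟨hinj, hsurj⟩
    have he : ∀ y : Y, e y = f.hom y := fun y => rfl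
    let ginv : FDRep.of ρ ⟶ Y :=
      ⟨FGModuleCat.ofHom e.symm.toLinearMap, by
        intro g
        ext v
        show e.symm (ρ g v) = Y.ρ g (e.symm v)
        apply hinj
        have h1 : ∀ x : V, f.hom (e.symm x) = x := fun x => e.apply_symm_apply x
        exact (h1 _).trans (((hcomm g (e.symm v)).trans (by rw [h1])).symm)⟩
    refine ⟨ginv, ?_, ?_⟩
    · apply Action.hom_ext
      rw [Action.comp_hom, Action.id_hom]
      ext y
      show e.symm (f.hom y) = y
      rw [← he, e.symm_apply_apply]
    · apply Action.hom_ext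
      rw [Action.comp_hom, Action.id_hom]
      ext v
      show f.hom (e.symm v) = v
      rw [← he, e.apply_symm_apply]

variable [Fintype G]

open scoped Classical in
lemma FSregChar (h : G) :
    LinearMap.trace ℂ (MonoidAlgebra ℂ G) ((Representation.ofMulAction ℂ G G) h) =
      if h = 1 then (Fintype.card G : ℂ) else 0 := by
  classical
  letI : FiniteDimensional ℂ (MonoidAlgebra ℂ G) :=
    Module.Finite.of_basis (MonoidAlgebra.basis G ℂ)
  rw [LinearMap.trace_eq_matrix_trace ℂ (MonoidAlgebra.basis G ℂ), Matrix.trace]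
  have : ∀ g : G, Matrix.diag ((LinearMap.toMatrix (MonoidAlgebra.basis G ℂ) (MonoidAlgebra.basis G ℂ))
      ((Representation.ofMulAction ℂ G G) h)) g = if h = 1 then 1 else 0 := by
    intro g
    rw [Matrix.diag_apply, LinearMap.toMatrix_apply]
    simp [Representation.ofMulAction_single, MonoidAlgebra.basis, Finsupp.single_apply]
  simp_rw [this]
  split <;> simp

lemma FSexists_compl {V : Type} [AddCommGroup V] [Module ℂ V]
    (ρ : Representation ℂ G V) (p : Submodule ℂ V)
    (hp : ∀ g : G, ∀ x ∈ p, ρ g x ∈ p) :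
    ∃ q : Submodule ℂ V, (∀ g : G, ∀ x ∈ q, ρ g x ∈ q) ∧ IsCompl p q := by
  letI : Module (MonoidAlgebra ℂ G) V := Module.compHom V (asAlgebraHom ρ).toRingHom
  have hsmul : ∀ (a : MonoidAlgebra ℂ G) (v : V), a • v = asAlgebraHom ρ a v := fun a v => rfl
  letI : IsScalarTower ℂ (MonoidAlgebra ℂ G) V :=
    ⟨fun c a v => by
      change asAlgebraHom ρ (c • a) v = c • asAlgebraHom ρ a v
      rw [map_smul]; rfl⟩
  haveI : NeZero ((Fintype.card G : ℂ)) := ⟨Nat.cast_ne_zero.mpr Fintype.card_ne_zero⟩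
  let P : Submodule (MonoidAlgebra ℂ G) V :=
    { carrier := p
      add_mem' := fun ha hb => p.add_mem ha hb
      zero_mem' := p.zero_mem
      smul_mem' := by
        intro a x hx
        rw [hsmul]
        induction a using MonoidAlgebra.induction_linear with
        | zero => simpa using p.zero_mem
        | add f g hf hg => rw [map_add]; exact p.add_mem hf hg
        | single g c =>
            rw [asAlgebraHom_single]
            exact p.smul_mem c (hp g x hx) }
  obtain ⟨Q, hQ⟩ := MonoidAlgebra.Submodule.exists_isCompl P
  have memQ : ∀ x, x ∈ Q.restrictScalars ℂ ↔ x ∈ Q := fun x => Iff.rfl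
  refine ⟨Q.restrictScalars ℂ, ?_, ?_⟩
  · intro g x hx
    have h2 : (MonoidAlgebra.single g (1:ℂ)) • x ∈ Q := Q.smul_mem _ hx
    rw [hsmul, asAlgebraHom_single, one_smul] at h2
    exact h2
  · have h1 : P ⊓ Q = ⊥ := disjoint_iff.mp hQ.disjoint
    have h2 : P ⊔ Q = ⊤ := codisjoint_iff.mp hQ.codisjoint
    constructor
    · rw [disjoint_iff, eq_bot_iff]
      intro x hx
      have : x ∈ P ⊓ Q := Submodule.mem_inf.mpr ⟨hx.1, hx.2⟩
      rw [h1] at this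
      simpa using this
    · rw [codisjoint_iff, eq_top_iff]
      intro x _
      have : x ∈ P ⊔ Q := by rw [h2]; trivial
      obtain ⟨y, hy, z, hz, rfl⟩ := Submodule.mem_sup.mp this
      exact Submodule.mem_sup.mpr ⟨y, hy, z, hz, rfl⟩

lemma FStrace_split {V : Type} [AddCommGroup V] [Module ℂ V] [FiniteDimensional ℂ V]
    (ρ : Representation ℂ G V) (p q : Submodule ℂ V) (hpq : IsCompl p q)
    (hp : ∀ g : G, ∀ x ∈ p, ρ g x ∈ p) (hq : ∀ g : G, ∀ x ∈ q, ρ g x ∈ q) (h : G) :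
    LinearMap.trace ℂ V (ρ h) =
      LinearMap.trace ℂ p ((ρ h).restrict (hp h)) +
        LinearMap.trace ℂ q ((ρ h).restrict (hq h)) := by
  have hint : DirectSum.IsInternal (fun b : Bool => bif b then p else q) := by
    rw [DirectSum.isInternal_submodule_iff_isCompl _ (i := true) (j := false) (by simp)
      (by ext b; cases b <;> simp)]
    exact hpq
  have hmaps : ∀ b : Bool,
      Set.MapsTo (ρ h) ((bif b then p else q : Submodule ℂ V) : Set V)
        ((bif b then p else q : Submodule ℂ V) : Set V) := by
    intro b; cases b
    · exact fun x hx => hq h x hx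
    · exact fun x hx => hp h x hx
  rw [LinearMap.trace_eq_sum_trace_restrict hint hmaps, Fintype.sum_bool]
  rfl

lemma FSchar_decomp {ι : Type*} [Fintype ι] (W : ι → FDRep ℂ G)
    (hall : ∀ V : FDRep ℂ G, CategoryTheory.Simple V → ∃ i, Nonempty (V ≅ W i)) (n : ℕ) :
    ∀ (V : Type) (_ : AddCommGroup V), ∀ (_ : Module ℂ V) (_ : FiniteDimensional ℂ V)
    (ρ : Representation ℂ G V), finrank ℂ V = n →
    ∃ c : ι → ℕ, ∀ h : G,
      LinearMap.trace ℂ V (ρ h) = ∑ i, (c i : ℂ) * (W i).character h := by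
  classical
  induction n using Nat.strong_induction_on with
  | _ n IH =>
  intro V _ _ _ ρ hn
  rcases Nat.eq_zero_or_pos n with h0 | hpos
  · refine ⟨0, fun h => ?_⟩
    rw [h0] at hn
    haveI : Subsingleton V := Module.finrank_zero_iff.mp hn
    have : ρ h = 0 := Subsingleton.elim _ _
    rw [this, map_zero]
    simp
  · by_cases hex : ∃ p : Submodule ℂ V, (∀ g : G, ∀ x ∈ p, ρ g x ∈ p) ∧ p ≠ ⊥ ∧ p ≠ ⊤
    · obtain ⟨p, hp, hpbot, hptop⟩ := hex
      obtain ⟨q, hq, hpq⟩ := FSexists_compl ρ p hp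
      have hqtop : q ≠ ⊤ := by
        rintro rfl
        exact hpbot (disjoint_top.mp hpq.disjoint)
      obtain ⟨c₁, hc₁⟩ := IH (finrank ℂ p)
        (by rw [← hn]; exact Submodule.finrank_lt hptop)
        p inferInstance inferInstance inferInstance (FSsubRep ρ p hp) rfl
      obtain ⟨c₂, hc₂⟩ := IH (finrank ℂ q)
        (by rw [← hn]; exact Submodule.finrank_lt hqtop)
        q inferInstance inferInstance inferInstance (FSsubRep ρ q hq) rfl
      refine ⟨c₁ + c₂, fun h => ?_⟩
      have hc₁' := hc₁ h; have hc₂' := hc₂ h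
      rw [FSsubRep_eq] at hc₁' hc₂'
      rw [FStrace_split ρ p q hpq hp hq h, hc₁', hc₂', ← Finset.sum_add_distrib]
      refine Finset.sum_congr rfl fun i _ => ?_
      rw [Pi.add_apply, Nat.cast_add, add_mul]
    · push_neg at hex
      have hs : ∀ p : Submodule ℂ V, (∀ g : G, ∀ x ∈ p, ρ g x ∈ p) → p = ⊥ ∨ p = ⊤ := by
        intro p hp
        by_cases hb : p = ⊥
        · exact Or.inl hb
        · exact Or.inr (hex p hp hb)
      haveI : Nontrivial V := Module.nontrivial_of_finrank_pos (R := ℂ) (hn ▸ hpos)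
      haveI := FSsimple ρ hs
      obtain ⟨i0, ⟨e⟩⟩ := hall (FDRep.of ρ) inferInstance
      refine ⟨fun i => if i = i0 then 1 else 0, fun h => ?_⟩
      have hchar : (FDRep.of ρ).character h = (W i0).character h := by
        rw [FDRep.char_iso e]
      have htr : LinearMap.trace ℂ V (ρ h) = (FDRep.of ρ).character h := rfl
      rw [htr, hchar]
      simp only [Nat.cast_ite, Nat.cast_one, Nat.cast_zero, ite_mul, one_mul, zero_mul]
      rw [Finset.sum_ite_eq' Finset.univ i0 (fun i => (W i).character h)]
      simp

open scoped Classical in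
lemma FSorth {ι : Type*} (W : ι → FDRep ℂ G)
    (hsimple : ∀ i, CategoryTheory.Simple (W i))
    (hdist : ∀ i j, Nonempty (W i ≅ W j) → i = j) (i j : ι) :
    (Fintype.card G : ℂ)⁻¹ * ∑ g : G, (W i).character g * (W j).character g⁻¹ =
      if i = j then 1 else 0 := by
  haveI := hsimple i
  haveI := hsimple j
  letI : Fintype (GrpCat.of G) := ‹Fintype G›
  haveI : Nonempty (GrpCat.of G) := ⟨(1 : G)⟩
  letI : Invertible ((Fintype.card (GrpCat.of G) : ℂ)) :=
    invertibleOfNonzero (Nat.cast_ne_zero.mpr Fintype.card_ne_zero)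
  have horth := FDRep.char_orthonormal (k := ℂ) (G := GrpCat.of G) (W i) (W j)
  rw [Nat.card_eq_fintype_card] at horth
  have horth' : (Fintype.card G : ℂ)⁻¹ * ∑ g : G, (W i).character g * (W j).character g⁻¹ =
      if Nonempty (W i ≅ W j) then 1 else 0 := horth
  rw [horth']
  by_cases hij : i = j
  · subst hij
    rw [if_pos ⟨Iso.refl _⟩, if_pos rfl]
  · rw [if_neg (fun hne => hij (hdist i j hne)), if_neg hij]

end FSaux

open scoped Classical in
theorem card_sqrt_one_eq_sum_indicator_mul_dim
    (G : Type) [Group G] [Fintype G]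
    (ι : Type*) [Fintype ι] (W : ι → FDRep ℂ G)
    (hsimple : ∀ i, CategoryTheory.Simple (W i))
    (hdist : ∀ i j, Nonempty (W i ≅ W j) → i = j)
    (hall : ∀ V : FDRep ℂ G, CategoryTheory.Simple V → ∃ i, Nonempty (V ≅ W i)) :
    (Nat.card {g : G // g ^ 2 = 1} : ℂ) =
      ∑ i, ((Fintype.card G : ℂ)⁻¹ * ∑ g : G, (W i).character (g ^ 2)) *
        (Module.finrank ℂ (W i) : ℂ) := by
  have hcard : (Fintype.card G : ℂ) ≠ 0 := Nat.cast_ne_zero.mpr Fintype.card_ne_zero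
  letI : FiniteDimensional ℂ (MonoidAlgebra ℂ G) :=
    Module.Finite.of_basis (MonoidAlgebra.basis G ℂ)
  -- decompose the regular character
  obtain ⟨c, hc⟩ := FSchar_decomp W hall (Module.finrank ℂ (MonoidAlgebra ℂ G)) (MonoidAlgebra ℂ G)
    inferInstance inferInstance inferInstance (Representation.ofMulAction ℂ G G) rfl
  have hreg : ∀ h : G, (if h = 1 then (Fintype.card G : ℂ) else 0) =
      ∑ i, (c i : ℂ) * (W i).character h := by
    intro h
    rw [← FSregChar h]
    exact hc h
  -- identify the coefficients
  have hcoef : ∀ j, (c j : ℂ) = (Module.finrank ℂ (W j) : ℂ) := by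
    intro j
    have h1 : (Fintype.card G : ℂ)⁻¹ *
        ∑ g : G, (if g = 1 then (Fintype.card G : ℂ) else 0) * (W j).character g⁻¹
        = (Module.finrank ℂ (W j) : ℂ) := by
      simp only [ite_mul, zero_mul]
      rw [Finset.sum_ite_eq' Finset.univ (1 : G)
        (fun g => (Fintype.card G : ℂ) * (W j).character g⁻¹)]
      simp only [Finset.mem_univ, if_true, inv_one, FDRep.char_one]
      field_simp
    have h2 : (Fintype.card G : ℂ)⁻¹ *
        ∑ g : G, (if g = 1 then (Fintype.card G : ℂ) else 0) * (W j).character g⁻¹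
        = (c j : ℂ) := by
      have : ∀ g : G, (if g = 1 then (Fintype.card G : ℂ) else 0) * (W j).character g⁻¹
          = ∑ i, (c i : ℂ) * ((W i).character g * (W j).character g⁻¹) := by
        intro g
        rw [hreg g, Finset.sum_mul]
        exact Finset.sum_congr rfl fun i _ => by ring
      simp_rw [this]
      rw [Finset.sum_comm]
      rw [Finset.mul_sum]
      have : ∀ i, (Fintype.card G : ℂ)⁻¹ *
          (∑ g : G, (c i : ℂ) * ((W i).character g * (W j).character g⁻¹))
          = (c i : ℂ) * (if i = j then 1 else 0) := by
        intro i
        rw [← Finset.mul_sum, ← FSorth W hsimple hdist i j]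
        ring
      simp_rw [this]
      simp [mul_ite, mul_one, mul_zero, Finset.sum_ite_eq']
    rw [← h2, h1]
  -- final computation
  have key : ∀ h : G, (if h = 1 then (Fintype.card G : ℂ) else 0) =
      ∑ i, ((Module.finrank ℂ (W i) : ℂ)) * (W i).character h := by
    intro h
    rw [hreg h]
    exact Finset.sum_congr rfl fun i _ => by rw [hcoef i]
  calc (Nat.card {g : G // g ^ 2 = 1} : ℂ)
      = ∑ g : G, (if g ^ 2 = 1 then (1:ℂ) else 0) := by
        rw [Finset.sum_boole]
        rw [Nat.card_eq_fintype_card, Fintype.card_subtype]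
    _ = (Fintype.card G : ℂ)⁻¹ * ∑ g : G, (if g ^ 2 = 1 then (Fintype.card G : ℂ) else 0) := by
        rw [Finset.mul_sum]
        exact Finset.sum_congr rfl fun g _ => by split <;> field_simp <;> simp
    _ = (Fintype.card G : ℂ)⁻¹ *
          ∑ g : G, ∑ i, ((Module.finrank ℂ (W i) : ℂ)) * (W i).character (g ^ 2) := by
        rw [Finset.sum_congr rfl fun g _ => key (g ^ 2)]
    _ = ∑ i, ((Fintype.card G : ℂ)⁻¹ * ∑ g : G, (W i).character (g ^ 2)) *
          (Module.finrank ℂ (W i) : ℂ) := by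
        rw [Finset.sum_comm]
        rw [Finset.mul_sum]
        exact Finset.sum_congr rfl fun i _ => by
          rw [← Finset.mul_sum]
          ring
end
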